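/- arXiv:2208.12115 — 6 statements merged into one kernel-verified Lean document; each statement's English description precedes it below -/
import Mathlib

section
/- Let X be a finite-dimensional normed space, C ⊆ X closed and convex, f : X → ℝ continuous, and suppose the quadratic growth condition f(x) ≥ f(x̄) + (δ/2)‖x − x̄‖² holds for all x ∈ C with ‖x − x̄‖ ≤ ε, where x̄ ∈ C and δ, ε > 0. Then for every continuous linear functional x* on X with ‖x*‖ < δε/2, the perturbed problem of minimizing f(x) + ⟨x*, x⟩ over C has a local minimizer z satisfying ‖z − x̄‖ ≤ 2δ⁻¹‖x*‖. -/
open Set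

/-! Minimize `f + x*` over the compact set `C ∩ closedBall x̄ ε`. Comparing the minimizer `z` with
`x̄` and using the growth condition gives `(δ/2)‖z - x̄‖² ≤ ‖x*‖ ‖z - x̄‖`, i.e. the claimed bound,
and the smallness of `‖x*‖` puts `z` strictly inside the ball, where the ball constraint is
inactive, so `z` is a local minimizer over `C`. -/

theorem IsMinOn.isLocalMinOn_of_inter_mem_nhds {α β : Type*} [TopologicalSpace α] [Preorder β]
    {g : α → β} {C U : Set α} {z : α} (hmin : IsMinOn g (C ∩ U) z) (hU : U ∈ nhds z) :
    IsLocalMinOn g C z :=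
  hmin.filter_mono (Filter.le_principal_iff.mpr (inter_mem_nhdsWithin C hU))

theorem le_div_of_mul_sq_le_mul {a b t : ℝ} (ha : 0 < a) (hb : 0 ≤ b) (h : a * t ^ 2 ≤ b * t) :
    t ≤ b / a := by
  rcases le_or_gt t 0 with ht | ht
  · exact ht.trans (by positivity)
  · rw [le_div_iff₀ ha]
    nlinarith

theorem norm_sub_le_of_quadratic_growth {X : Type*} [NormedAddCommGroup X] [NormedSpace ℝ X]
    {f : X → ℝ} {xbar z : X} {δ : ℝ} (hδ : 0 < δ) (xstar : X →L[ℝ] ℝ)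
    (hgrowth : f xbar + δ / 2 * ‖z - xbar‖ ^ 2 ≤ f z)
    (hle : f z + xstar z ≤ f xbar + xstar xbar) :
    ‖z - xbar‖ ≤ 2 * δ⁻¹ * ‖xstar‖ := by
  have hdual : xstar xbar - xstar z ≤ ‖xstar‖ * ‖z - xbar‖ :=
    calc xstar xbar - xstar z = xstar (xbar - z) := (map_sub xstar xbar z).symm
      _ ≤ ‖xstar‖ * ‖xbar - z‖ := (le_abs_self _).trans (xstar.le_opNorm _)
      _ = ‖xstar‖ * ‖z - xbar‖ := by rw [norm_sub_rev]
  have hsq : δ / 2 * ‖z - xbar‖ ^ 2 ≤ ‖xstar‖ * ‖z - xbar‖ := by linarith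
  calc ‖z - xbar‖ ≤ ‖xstar‖ / (δ / 2) :=
        le_div_of_mul_sq_le_mul (by positivity) (norm_nonneg _) hsq
    _ = 2 * δ⁻¹ * ‖xstar‖ := by field_simp

theorem perturbed_problem_has_local_minimizer_general
    {X : Type*} [NormedAddCommGroup X] [NormedSpace ℝ X] [FiniteDimensional ℝ X]
    (C : Set X) (hCclosed : IsClosed C)
    (f : X → ℝ) (hf : Continuous f)
    (xbar : X) (hxbar : xbar ∈ C) (δ ε : ℝ) (hδ : 0 < δ) (hε : 0 < ε)
    (growth : ∀ x ∈ C, ‖x - xbar‖ ≤ ε →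
      f xbar + δ / 2 * ‖x - xbar‖ ^ 2 ≤ f x)
    (xstar : X →L[ℝ] ℝ) (hxstar : ‖xstar‖ < δ * ε / 2) :
    ∃ z ∈ C, ‖z - xbar‖ ≤ 2 * δ⁻¹ * ‖xstar‖ ∧
      IsLocalMinOn (fun x => f x + xstar x) C z := by
  have hxbarK : xbar ∈ C ∩ Metric.closedBall xbar ε := ⟨hxbar, Metric.mem_closedBall_self hε.le⟩
  obtain ⟨z, ⟨hzC, hzε⟩, hmin⟩ :=
    ((isCompact_closedBall xbar ε).inter_left hCclosed).exists_isMinOn ⟨xbar, hxbarK⟩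
      (hf.add xstar.continuous).continuousOn
  rw [Metric.mem_closedBall, dist_eq_norm] at hzε
  have hbound : ‖z - xbar‖ ≤ 2 * δ⁻¹ * ‖xstar‖ :=
    norm_sub_le_of_quadratic_growth hδ xstar (growth z hzC hzε) (hmin hxbarK)
  have hinterior : z ∈ Metric.ball xbar ε := by
    have : 2 * δ⁻¹ * ‖xstar‖ < ε := by
      calc 2 * δ⁻¹ * ‖xstar‖ < 2 * δ⁻¹ * (δ * ε / 2) := by gcongr
        _ = ε := by field_simp
    rw [Metric.mem_ball, dist_eq_norm]
    linarith
  exact ⟨z, hzC, hbound,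
    hmin.isLocalMinOn_of_inter_mem_nhds (Metric.closedBall_mem_nhds_of_mem hinterior)⟩

/-- In finite dimensions, quadratic growth at `x̄` implies that every sufficiently small
linear perturbation of the problem has a local minimizer near `x̄`. -/
theorem perturbed_problem_has_local_minimizer
    {X : Type*} [NormedAddCommGroup X] [NormedSpace ℝ X] [FiniteDimensional ℝ X]
    (C : Set X) (hCclosed : IsClosed C) (hCconv : Convex ℝ C)
    (f : X → ℝ) (hf : Continuous f)
    (xbar : X) (hxbar : xbar ∈ C) (δ ε : ℝ) (hδ : 0 < δ) (hε : 0 < ε)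
    (growth : ∀ x ∈ C, ‖x - xbar‖ ≤ ε →
      f xbar + δ / 2 * ‖x - xbar‖ ^ 2 ≤ f x)
    (xstar : X →L[ℝ] ℝ) (hxstar : ‖xstar‖ < δ * ε / 2) :
    ∃ z ∈ C, ‖z - xbar‖ ≤ 2 * δ⁻¹ * ‖xstar‖ ∧
      IsLocalMinOn (fun x => f x + xstar x) C z :=
  perturbed_problem_has_local_minimizer_general C hCclosed f hf xbar hxbar δ ε hδ hε growth xstar
    hxstar
end

section
/- Let S be the Volterra operator on L²(0,1). For every (t, u) ∈ ℝ × L²(0,1) with |u| ≤ t a.e., the quantity 2t² + 2‖Su‖²_{L²} − ‖u‖²_{L²} is at least (1/3)t², and consequently at least (1/6)(t² + ‖u‖²_{L²}). -/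
open MeasureTheory Set

theorem integral_sq_le_sq_of_abs_le {α : Type*} [MeasurableSpace α] {μ : Measure α}
    [IsProbabilityMeasure μ] {f : α → ℝ} {C : ℝ} (hf : ∀ᵐ x ∂μ, |f x| ≤ C) :
    ∫ x, f x ^ 2 ∂μ ≤ C ^ 2 := by
  have hsq : ∀ᵐ x ∂μ, ‖f x ^ 2‖ ≤ C ^ 2 := by
    filter_upwards [hf] with x hx
    rw [Real.norm_eq_abs, abs_pow]
    exact pow_le_pow_left₀ (abs_nonneg _) hx 2
  calc ∫ x, f x ^ 2 ∂μ ≤ ‖∫ x, f x ^ 2 ∂μ‖ := Real.le_norm_self _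
    _ ≤ C ^ 2 * μ.real univ := norm_integral_le_of_norm_le_const hsq
    _ = C ^ 2 := by rw [probReal_univ, mul_one]

instance isProbabilityMeasure_volume_restrict_Ioo_zero_one :
    IsProbabilityMeasure (volume.restrict (Ioo (0:ℝ) 1)) :=
  ⟨by simp⟩

theorem second_order_form_coercive_on_cone_general
    (u : ℝ → ℝ)
    (t : ℝ) (hbound : ∀ᵐ x ∂(volume.restrict (Ioo (0:ℝ) 1)), |u x| ≤ t) :
    (1 / 3) * t ^ 2 ≤
      2 * t ^ 2 + 2 * (∫ x in Ioo (0:ℝ) 1, (∫ ξ in Ioo 0 x, u ξ) ^ 2)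
        - ∫ x in Ioo (0:ℝ) 1, u x ^ 2 ∧
    (1 / 6) * (t ^ 2 + ∫ x in Ioo (0:ℝ) 1, u x ^ 2) ≤
      2 * t ^ 2 + 2 * (∫ x in Ioo (0:ℝ) 1, (∫ ξ in Ioo 0 x, u ξ) ^ 2)
        - ∫ x in Ioo (0:ℝ) 1, u x ^ 2 := by
  have hu_le : ∫ x in Ioo (0:ℝ) 1, u x ^ 2 ≤ t ^ 2 := integral_sq_le_sq_of_abs_le hbound
  have hu_nonneg : 0 ≤ ∫ x in Ioo (0:ℝ) 1, u x ^ 2 := integral_nonneg fun x => sq_nonneg _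
  have hSu_nonneg : 0 ≤ ∫ x in Ioo (0:ℝ) 1, (∫ ξ in Ioo 0 x, u ξ) ^ 2 :=
    integral_nonneg fun x => sq_nonneg _
  constructor <;> linarith

/-- On the cone `|u| ≤ t` a.e., the quadratic form
`2t² + 2‖Su‖² − ‖u‖²` is bounded below by `(1/3)t²` and by `(1/6)(t² + ‖u‖²)`. -/
theorem second_order_form_coercive_on_cone
    (u : ℝ → ℝ) (hu : AEStronglyMeasurable u (volume.restrict (Ioo (0:ℝ) 1)))
    (t : ℝ) (hbound : ∀ᵐ x ∂(volume.restrict (Ioo (0:ℝ) 1)), |u x| ≤ t) :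
    (1 / 3) * t ^ 2 ≤
      2 * t ^ 2 + 2 * (∫ x in Ioo (0:ℝ) 1, (∫ ξ in Ioo 0 x, u ξ) ^ 2)
        - ∫ x in Ioo (0:ℝ) 1, u x ^ 2 ∧
    (1 / 6) * (t ^ 2 + ∫ x in Ioo (0:ℝ) 1, u x ^ 2) ≤
      2 * t ^ 2 + 2 * (∫ x in Ioo (0:ℝ) 1, (∫ ξ in Ioo 0 x, u ξ) ^ 2)
        - ∫ x in Ioo (0:ℝ) 1, u x ^ 2 :=
  second_order_form_coercive_on_cone_general u t hbound
end

section
/- Define f₀(t, u) = t² + ‖Su‖²_{L²} − (1/2)‖u‖²_{L²} on the cone C. Then the quadratic growth condition holds at (0,0): f₀(t,u) ≥ (1/12)(t² + ‖u‖²_{L²}) for all (t,u) ∈ C. -/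
/-!
On the cone, `‖u‖² ≤ t²` because `(0,1)` has unit measure. Dropping `‖Su‖² ≥ 0` then gives
`f₀(t,u) ≥ t² / 2 ≥ (t² + ‖u‖²) / 4`, so the growth bound follows from the cone constraint
alone, without the second-order analysis of `f₀`.
-/

open MeasureTheory Set

theorem integral_sq_le_of_abs_le {α : Type*} [MeasurableSpace α] {μ : Measure α}
    [IsFiniteMeasure μ] {u : α → ℝ} {t : ℝ} (hbound : ∀ᵐ x ∂μ, |u x| ≤ t) :
    ∫ x, u x ^ 2 ∂μ ≤ t ^ 2 * μ.real univ := by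
  have hsq : ∀ᵐ x ∂μ, ‖u x ^ 2‖ ≤ t ^ 2 := by
    filter_upwards [hbound] with x hx
    rw [norm_pow, Real.norm_eq_abs]
    exact pow_le_pow_left₀ (abs_nonneg _) hx 2
  exact (le_abs_self _).trans (norm_integral_le_of_norm_le_const hsq)

theorem f0_quadratic_growth_on_cone_general
    (u : ℝ → ℝ)
    (t : ℝ) (hbound : ∀ᵐ x ∂(volume.restrict (Ioo (0:ℝ) 1)), |u x| ≤ t) :
    (1 / 12) * (t ^ 2 + ∫ x in Ioo (0:ℝ) 1, u x ^ 2) ≤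
      t ^ 2 + (∫ x in Ioo (0:ℝ) 1, (∫ ξ in Ioo 0 x, u ξ) ^ 2)
        - (1 / 2) * ∫ x in Ioo (0:ℝ) 1, u x ^ 2 := by
  have hu_le : ∫ x in Ioo (0:ℝ) 1, u x ^ 2 ≤ t ^ 2 := by
    simpa using integral_sq_le_of_abs_le hbound
  have hu_nonneg : 0 ≤ ∫ x in Ioo (0:ℝ) 1, u x ^ 2 :=
    integral_nonneg fun x => sq_nonneg _
  have hSu_nonneg : 0 ≤ ∫ x in Ioo (0:ℝ) 1, (∫ ξ in Ioo 0 x, u ξ) ^ 2 :=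
    integral_nonneg fun x => sq_nonneg _
  linarith

/-- Quadratic growth of `f₀(t,u) = t² + ‖Su‖² − (1/2)‖u‖²` at `(0,0)` on the cone
`C = {(t,u) : |u| ≤ t a.e.}`: `f₀(t,u) ≥ (1/12)(t² + ‖u‖²)`. -/
theorem f0_quadratic_growth_on_cone
    (u : ℝ → ℝ) (hu : AEStronglyMeasurable u (volume.restrict (Ioo (0:ℝ) 1)))
    (t : ℝ) (hbound : ∀ᵐ x ∂(volume.restrict (Ioo (0:ℝ) 1)), |u x| ≤ t) :
    (1 / 12) * (t ^ 2 + ∫ x in Ioo (0:ℝ) 1, u x ^ 2) ≤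
      t ^ 2 + (∫ x in Ioo (0:ℝ) 1, (∫ ξ in Ioo 0 x, u ξ) ^ 2)
        - (1 / 2) * ∫ x in Ioo (0:ℝ) 1, u x ^ 2 :=
  f0_quadratic_growth_on_cone_general u t hbound
end

section
/- Let t̃ > 0 and let ũ minimize ‖Su‖²_{L²} − (1/2)‖u‖²_{L²} over {u ∈ L²(0,1) : |u| ≤ t̃ a.e.}. Then for a.e. x ∈ (0,1): if (S*Sũ)(x) > 0 then ũ(x) = −t̃, and if (S*Sũ)(x) < 0 then ũ(x) = t̃. -/
/-!
A needle variation. Write `ψ = S*Sũ`. If `ψ ≥ δ` and `ũ ≥ -t̃ + δ` on a set of positive measure,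
replace `ũ` by `-t̃` on a subset `B` of small measure `m`. This lowers `‖Su‖²` to first order by at
least `2δ²m`, does not lower `‖u‖²` since `|ũ| ≤ t̃`, and, as `S` is bounded from `L¹` to `L²`,
costs only `O(m²)` at second order; for small `m` this contradicts minimality. The case `ψ < 0`
follows by applying this to the minimizer `-ũ`.
-/

open MeasureTheory Set

noncomputable def μ01 : Measure ℝ := volume.restrict (Ioo 0 1)

open scoped ENNReal RealInnerProductSpace

theorem exists_measurableSet_subset_measure_pos_lt {μ : Measure ℝ} (hμ : μ ≤ volume)
    {A : Set ℝ} (hA : MeasurableSet A) (hA0 : μ A ≠ 0) {ε : ℝ} (hε : 0 < ε) :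
    ∃ B ⊆ A, MeasurableSet B ∧ 0 < μ B ∧ μ B < ENNReal.ofReal ε := by
  set I : ℤ → Set ℝ := fun n => Ioc (0 + n • (ε / 2)) (0 + (n + 1) • (ε / 2))
  obtain ⟨n, hn⟩ : ∃ n, μ (A ∩ I n) ≠ 0 := by
    by_contra! h
    apply hA0
    rw [← inter_univ A, ← iUnion_Ioc_add_zsmul (half_pos hε) 0, inter_iUnion]
    exact measure_iUnion_null_iff.2 h
  refine ⟨A ∩ I n, inter_subset_left, hA.inter measurableSet_Ioc, pos_iff_ne_zero.2 hn, ?_⟩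
  calc μ (A ∩ I n) ≤ volume (I n) := (hμ _).trans (measure_mono inter_subset_right)
    _ = ENNReal.ofReal (ε / 2) := by simp [I, Real.volume_Ioc, add_smul]
    _ < ENNReal.ofReal ε := (ENNReal.ofReal_lt_ofReal_iff hε).2 (half_lt_self hε)

theorem measure_eq_zero_of_forall_subset_mul_le_sq {μ : Measure ℝ} (hμ : μ ≤ volume)
    {A : Set ℝ} (hA : MeasurableSet A) {c K : ℝ} (hc : 0 < c)
    (h : ∀ B ⊆ A, MeasurableSet B → c * μ.real B ≤ K * μ.real B ^ 2) : μ A = 0 := by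
  by_contra hA0
  obtain ⟨B, hBA, hB, hB0, hBε⟩ :=
    exists_measurableSet_subset_measure_pos_lt hμ hA hA0 (div_pos hc (by positivity : 0 < |K| + 1))
  have hm0 : 0 < μ.real B := ENNReal.toReal_pos hB0.ne' hBε.ne_top
  have hmε : μ.real B * (|K| + 1) < c :=
    (lt_div_iff₀ (by positivity)).1 ((ENNReal.lt_ofReal_iff_toReal_lt hBε.ne_top).1 hBε)
  nlinarith [h B hBA hB, le_abs_self K, mul_pos hm0 hm0]

theorem ae_nonpos_or_nonpos_of_measure_setOf_le_and_le {α : Type*} [MeasurableSpace α]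
    {μ : Measure α} {f g : α → ℝ} (h : ∀ δ > 0, μ {x | δ ≤ f x ∧ δ ≤ g x} = 0) :
    ∀ᵐ x ∂μ, f x ≤ 0 ∨ g x ≤ 0 := by
  have hn : ∀ᵐ x ∂μ, ∀ n : ℕ, ¬(1 / ((n : ℝ) + 1) ≤ f x ∧ 1 / ((n : ℝ) + 1) ≤ g x) :=
    ae_all_iff.2 fun n => measure_eq_zero_iff_ae_notMem.1 (h _ (by positivity))
  filter_upwards [hn] with x hx
  by_contra! hfg
  obtain ⟨n, hn⟩ := exists_nat_one_div_lt (lt_min hfg.1 hfg.2)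
  exact hx n ⟨hn.le.trans (min_le_left _ _), hn.le.trans (min_le_right _ _)⟩

section Energy

variable {E F : Type*} [NormedAddCommGroup E] [InnerProductSpace ℝ E]
  [NormedAddCommGroup F] [InnerProductSpace ℝ F]

noncomputable def controlEnergy (S : E →L[ℝ] F) (u : E) : ℝ := ‖S u‖ ^ 2 - 1 / 2 * ‖u‖ ^ 2

theorem controlEnergy_neg (S : E →L[ℝ] F) (u : E) : controlEnergy S (-u) = controlEnergy S u := by
  simp [controlEnergy]

theorem IsMinOn.two_inner_adjoint_le_norm_sq [CompleteSpace E] [CompleteSpace F]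
    {S : E →L[ℝ] F} {K : Set E} {u w : E} (hmin : IsMinOn (controlEnergy S) K u)
    (hw : u - w ∈ K) (hnorm : ‖u‖ ≤ ‖u - w‖) :
    2 * ⟪ContinuousLinearMap.adjoint S (S u), w⟫ ≤ ‖S w‖ ^ 2 := by
  have h := isMinOn_iff.1 hmin _ hw
  rw [controlEnergy, controlEnergy, map_sub, norm_sub_sq_real,
    ← ContinuousLinearMap.adjoint_inner_left] at h
  nlinarith [pow_le_pow_left₀ (norm_nonneg u) hnorm 2]

end Energy

section Lp

variable {α : Type*} [MeasurableSpace α] {μ : Measure α}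

def admissibleControls (μ : Measure α) (t : ℝ) : Set (Lp ℝ 2 μ) := {u | ∀ᵐ x ∂μ, |u x| ≤ t}

theorem mem_admissibleControls {t : ℝ} {u : Lp ℝ 2 μ} :
    u ∈ admissibleControls μ t ↔ ∀ᵐ x ∂μ, |u x| ≤ t :=
  Iff.rfl

theorem neg_mem_admissibleControls {t : ℝ} {u : Lp ℝ 2 μ} (hu : u ∈ admissibleControls μ t) :
    -u ∈ admissibleControls μ t := by
  filter_upwards [hu, Lp.coeFn_neg u] with x hx hneg
  rwa [hneg, Pi.neg_apply, abs_neg]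

theorem IsMinOn.neg_admissibleControls {S : Lp ℝ 2 μ →L[ℝ] Lp ℝ 2 μ} {t : ℝ} {u : Lp ℝ 2 μ}
    (hmin : IsMinOn (controlEnergy S) (admissibleControls μ t) u) :
    IsMinOn (controlEnergy S) (admissibleControls μ t) (-u) :=
  isMinOn_iff.2 fun v hv => by
    rw [controlEnergy_neg]
    exact isMinOn_iff.1 hmin v hv

theorem exists_needle_perturbation [IsFiniteMeasure μ] {t : ℝ} {u : Lp ℝ 2 μ}
    (hu : u ∈ admissibleControls μ t) {B : Set α} (hB : MeasurableSet B) :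
    ∃ d : Lp ℝ 2 μ, d =ᵐ[μ] B.indicator (fun x => t + u x) ∧
      u - d ∈ admissibleControls μ t ∧ ‖u‖ ≤ ‖u - d‖ := by
  classical
  have hdLp : MemLp (B.indicator fun x => t + u x) 2 μ :=
    ((memLp_const t).add (Lp.memLp u)).indicator hB
  have hd := hdLp.coeFn_toLp
  set d := hdLp.toLp _
  have hud : ∀ᵐ x ∂μ, (u - d) x = B.piecewise (fun _ => -t) u x := by
    filter_upwards [Lp.coeFn_sub u d, hd] with x hsub hdx
    rw [hsub, Pi.sub_apply, hdx]
    by_cases hx : x ∈ B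
    · rw [indicator_of_mem hx, piecewise_eq_of_mem _ _ _ hx]; ring
    · rw [indicator_of_notMem hx, piecewise_eq_of_notMem _ _ _ hx, sub_zero]
  refine ⟨d, hd, ?_, Lp.norm_le_norm_of_ae_le ?_⟩
  · rw [mem_admissibleControls]
    filter_upwards [hud, hu] with x hx hux
    by_cases hxB : x ∈ B
    · rw [hx, piecewise_eq_of_mem _ _ _ hxB, abs_neg, abs_of_nonneg ((abs_nonneg _).trans hux)]
    · rwa [hx, piecewise_eq_of_notMem _ _ _ hxB]
  · filter_upwards [hud, hu] with x hx hux
    by_cases hxB : x ∈ B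
    · rwa [hx, piecewise_eq_of_mem _ _ _ hxB, Real.norm_eq_abs, Real.norm_eq_abs, abs_neg,
        abs_of_nonneg ((abs_nonneg _).trans hux)]
    · rw [hx, piecewise_eq_of_notMem _ _ _ hxB]

theorem needle_variation_bound [IsFiniteMeasure μ] {S : Lp ℝ 2 μ →L[ℝ] Lp ℝ 2 μ} {C t δ : ℝ}
    (hS : ∀ w, ‖S w‖ ≤ C * ∫ x, |w x| ∂μ) {u : Lp ℝ 2 μ} (hu : u ∈ admissibleControls μ t)
    (hmin : IsMinOn (controlEnergy S) (admissibleControls μ t) u) {B : Set α}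
    (hB : MeasurableSet B)
    (hBδ : ∀ᵐ x ∂μ, x ∈ B → δ ≤ ContinuousLinearMap.adjoint S (S u) x ∧ δ ≤ t + u x)
    (hδ : 0 ≤ δ) :
    δ ^ 2 * μ.real B ≤ 2 * C ^ 2 * t ^ 2 * μ.real B ^ 2 := by
  obtain ⟨d, hd, hmem, hnorm⟩ := exists_needle_perturbation hu hB
  set ψ := ContinuousLinearMap.adjoint S (S u)
  have hψd : δ ^ 2 * μ.real B ≤ ⟪ψ, d⟫ := by
    calc δ ^ 2 * μ.real B = ∫ x, B.indicator (fun _ => δ ^ 2) x ∂μ := by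
          rw [integral_indicator_const _ hB, smul_eq_mul, mul_comm]
      _ ≤ ∫ x, ⟪ψ x, d x⟫ ∂μ := by
          refine integral_mono_of_nonneg (ae_of_all _ fun x => ?_) (L2.integrable_inner ψ d) ?_
          · exact indicator_nonneg (fun _ _ => sq_nonneg δ) x
          filter_upwards [hd, hBδ] with x hdx hx
          by_cases hxB : x ∈ B
          · obtain ⟨hψx, hux⟩ := hx hxB
            simp only [hdx, hxB, indicator_of_mem, RCLike.inner_apply, conj_trivial]
            nlinarith
          · simp [hdx, hxB]
      _ = ⟪ψ, d⟫ := (L2.inner_def ψ d).symm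
  have hd1 : ∫ x, |d x| ∂μ ≤ 2 * t * μ.real B := by
    calc ∫ x, |d x| ∂μ ≤ ∫ x, B.indicator (fun _ => 2 * t) x ∂μ := by
          refine integral_mono_ae ((Lp.memLp d).integrable one_le_two).abs
            ((integrable_const _).indicator hB) ?_
          filter_upwards [hd, hu] with x hdx hux
          by_cases hxB : x ∈ B
          · simp only [hdx, hxB, indicator_of_mem]
            rw [abs_le] at hux ⊢
            constructor <;> linarith
          · simp [hdx, hxB]
      _ = 2 * t * μ.real B := by rw [integral_indicator_const _ hB, smul_eq_mul, mul_comm]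
  have hSd : ‖S d‖ ^ 2 ≤ C ^ 2 * (2 * t * μ.real B) ^ 2 := by
    calc ‖S d‖ ^ 2 ≤ (C * ∫ x, |d x| ∂μ) ^ 2 := pow_le_pow_left₀ (norm_nonneg _) (hS d) 2
      _ = C ^ 2 * (∫ x, |d x| ∂μ) ^ 2 := by ring
      _ ≤ C ^ 2 * (2 * t * μ.real B) ^ 2 := by gcongr
  nlinarith [hmin.two_inner_adjoint_le_norm_sq hmem hnorm]

end Lp

theorem ae_eq_neg_of_adjoint_pos {μ : Measure ℝ} [IsFiniteMeasure μ] (hμ : μ ≤ volume)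
    {S : Lp ℝ 2 μ →L[ℝ] Lp ℝ 2 μ} {C t : ℝ} (hS : ∀ w, ‖S w‖ ≤ C * ∫ x, |w x| ∂μ)
    {u : Lp ℝ 2 μ} (hu : u ∈ admissibleControls μ t)
    (hmin : IsMinOn (controlEnergy S) (admissibleControls μ t) u) :
    ∀ᵐ x ∂μ, 0 < ContinuousLinearMap.adjoint S (S u) x → u x = -t := by
  set ψ := ContinuousLinearMap.adjoint S (S u)
  have hnull : ∀ δ > 0, μ {x | δ ≤ ψ x ∧ δ ≤ t + u x} = 0 := by
    intro δ hδ
    have hmeas : NullMeasurableSet {x | δ ≤ ψ x ∧ δ ≤ t + u x} μ :=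
      (nullMeasurableSet_le aemeasurable_const (Lp.aestronglyMeasurable ψ).aemeasurable).inter
        (nullMeasurableSet_le aemeasurable_const
          ((Lp.aestronglyMeasurable u).aemeasurable.const_add t))
    obtain ⟨A, hAsub, hA, hAeq⟩ := hmeas.exists_measurable_subset_ae_eq
    rw [← measure_congr hAeq]
    refine measure_eq_zero_of_forall_subset_mul_le_sq hμ hA (K := 2 * C ^ 2 * t ^ 2)
      (pow_pos hδ 2) fun B hBA hB => ?_
    exact needle_variation_bound hS hu hmin hB (ae_of_all _ fun x hx => hAsub (hBA hx)) hδ.le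
  filter_upwards [ae_nonpos_or_nonpos_of_measure_setOf_le_and_le hnull, hu] with x hx hux hψ
  rw [abs_le] at hux
  rcases hx with h | h <;> linarith

instance : IsFiniteMeasure μ01 := by
  rw [μ01]
  infer_instance

theorem norm_le_integral_abs_of_volterra {S : Lp ℝ 2 μ01 →L[ℝ] Lp ℝ 2 μ01}
    (hS : ∀ u : Lp ℝ 2 μ01, ∀ᵐ x ∂μ01, (S u : ℝ → ℝ) x = ∫ ξ in Ioo 0 x, u ξ)
    (w : Lp ℝ 2 μ01) : ‖S w‖ ≤ ∫ x, |w x| ∂μ01 := by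
  have hw : IntegrableOn (fun x => |w x|) (Ioo 0 1) := ((Lp.memLp w).integrable one_le_two).abs
  have hbound : ∀ᵐ x ∂μ01, ‖S w x‖ ≤ ∫ x, |w x| ∂μ01 := by
    filter_upwards [hS w, ae_restrict_mem measurableSet_Ioo] with x hx hx01
    rw [hx, Real.norm_eq_abs]
    calc |∫ ξ in Ioo 0 x, w ξ| ≤ ∫ ξ in Ioo 0 x, |w ξ| := abs_integral_le_integral_abs
      _ ≤ ∫ ξ in Ioo 0 1, |w ξ| :=
          setIntegral_mono_set hw (ae_of_all _ fun _ => abs_nonneg _)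
            (Ioo_subset_Ioo_right hx01.2.le).eventuallyLE
  have huniv : measureUnivNNReal μ01 = 1 := by
    simp [measureUnivNNReal, μ01]
  simpa [huniv] using Lp.norm_le_of_ae_bound (integral_nonneg fun _ => abs_nonneg _) hbound

theorem pontryagin_pointwise_characterization_general
    (S : Lp ℝ 2 μ01 →L[ℝ] Lp ℝ 2 μ01)
    (hS : ∀ u : Lp ℝ 2 μ01, ∀ᵐ x ∂μ01, (S u : ℝ → ℝ) x = ∫ ξ in Ioo 0 x, u ξ)
    (ttil : ℝ)
    (util : Lp ℝ 2 μ01) (hutil : ∀ᵐ x ∂μ01, |util x| ≤ ttil)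
    (hmin : ∀ u : Lp ℝ 2 μ01, (∀ᵐ x ∂μ01, |u x| ≤ ttil) →
      ‖S util‖ ^ 2 - (1 / 2) * ‖util‖ ^ 2 ≤ ‖S u‖ ^ 2 - (1 / 2) * ‖u‖ ^ 2) :
    ∀ᵐ x ∂μ01,
      ((ContinuousLinearMap.adjoint S (S util) : ℝ → ℝ) x > 0 → util x = -ttil) ∧
      ((ContinuousLinearMap.adjoint S (S util) : ℝ → ℝ) x < 0 → util x = ttil) := by
  have hS1 (w) : ‖S w‖ ≤ 1 * ∫ x, |w x| ∂μ01 :=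
    (norm_le_integral_abs_of_volterra hS w).trans_eq (one_mul _).symm
  have hmin' : IsMinOn (controlEnergy S) (admissibleControls μ01 ttil) util :=
    isMinOn_iff.2 hmin
  have hpos := ae_eq_neg_of_adjoint_pos (μ := μ01) Measure.restrict_le_self hS1 hutil hmin'
  have hneg := ae_eq_neg_of_adjoint_pos (μ := μ01) Measure.restrict_le_self hS1
    (neg_mem_admissibleControls hutil) hmin'.neg_admissibleControls
  rw [map_neg, map_neg] at hneg
  filter_upwards [hpos, hneg, Lp.coeFn_neg util,
    Lp.coeFn_neg (ContinuousLinearMap.adjoint S (S util))] with x hx₁ hx₂ hu hψ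
  refine ⟨hx₁, fun hlt => ?_⟩
  have := hx₂ (by rw [hψ, Pi.neg_apply]; linarith)
  rw [hu, Pi.neg_apply] at this
  linarith

/-- Pontryagin-type pointwise characterization: if `ũ` minimizes
`‖Su‖² − (1/2)‖u‖²` over `{u : |u| ≤ t̃ a.e.}` with `t̃ > 0`, then a.e.
`(S*Sũ)(x) > 0 ⟹ ũ(x) = −t̃` and `(S*Sũ)(x) < 0 ⟹ ũ(x) = t̃`. -/
theorem pontryagin_pointwise_characterization
    (S : Lp ℝ 2 μ01 →L[ℝ] Lp ℝ 2 μ01)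
    (hS : ∀ u : Lp ℝ 2 μ01, ∀ᵐ x ∂μ01, (S u : ℝ → ℝ) x = ∫ ξ in Ioo 0 x, u ξ)
    (ttil : ℝ) (httil : 0 < ttil)
    (util : Lp ℝ 2 μ01) (hutil : ∀ᵐ x ∂μ01, |util x| ≤ ttil)
    (hmin : ∀ u : Lp ℝ 2 μ01, (∀ᵐ x ∂μ01, |u x| ≤ ttil) →
      ‖S util‖ ^ 2 - (1 / 2) * ‖util‖ ^ 2 ≤ ‖S u‖ ^ 2 - (1 / 2) * ‖u‖ ^ 2) :
    ∀ᵐ x ∂μ01,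
      ((ContinuousLinearMap.adjoint S (S util) : ℝ → ℝ) x > 0 → util x = -ttil) ∧
      ((ContinuousLinearMap.adjoint S (S util) : ℝ → ℝ) x < 0 → util x = ttil) :=
  pontryagin_pointwise_characterization_general S hS ttil util hutil hmin
end

section
/- Let t̃ > 0 and u ∈ L²(0,1) with |u| ≤ t̃ a.e. Suppose that for a.e. x the implications hold: (S*Su)(x) > 0 ⟹ u(x) = −t̃ and (S*Su)(x) < 0 ⟹ u(x) = t̃. Then S*Su ≡ 0 on [0,1], and hence u = 0, contradicting |u| = t̃ > 0 a.e. where S*Su = 0. Consequently no such u can be a minimizer with t̃ > 0. -/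
/-! Since `u` has the sign opposite to that of `S*Su` wherever `S*Su ≠ 0`, the pairing
`⟪S*Su, u⟫ = ‖Su‖²` is `≤ 0`, so `Su = 0` (this replaces the maximum-principle argument).
The Volterra operator is injective: if the primitive of `u` vanishes, so does its derivative,
which is `u` a.e. by the Lebesgue differentiation theorem. Hence `u = 0`, and the constant
control `v = t̃` gives `‖Sv‖² - ½‖v‖² = t̃²/3 - t̃²/2 < 0`, so `u` is not a minimizer. -/

open MeasureTheory Set

instance : IsProbabilityMeasure μ01 :=
  ⟨by simp [μ01]⟩

theorem mul_nonpos_of_bangBang {w u t : ℝ} (ht : 0 ≤ t) (hpos : 0 < w → u = -t)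
    (hneg : w < 0 → u = t) : w * u ≤ 0 := by
  rcases lt_trichotomy w 0 with hw | rfl | hw
  · rw [hneg hw]; exact mul_nonpos_of_nonpos_of_nonneg hw.le ht
  · rw [zero_mul]
  · rw [hpos hw]; exact mul_nonpos_of_nonneg_of_nonpos hw.le (neg_nonpos.mpr ht)

theorem ContinuousLinearMap.apply_eq_zero_of_inner_adjoint_apply_nonpos
    {E F : Type*} [NormedAddCommGroup E] [InnerProductSpace ℝ E] [CompleteSpace E]
    [NormedAddCommGroup F] [InnerProductSpace ℝ F] [CompleteSpace F]
    (T : E →L[ℝ] F) {u : E} (h : inner ℝ (adjoint T (T u)) u ≤ 0) : T u = 0 := by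
  rw [adjoint_inner_left, real_inner_self_eq_norm_sq] at h
  exact norm_eq_zero.mp <| pow_eq_zero_iff two_ne_zero |>.mp <| h.antisymm (sq_nonneg _)

namespace MeasureTheory.L2

variable {α : Type*} [MeasurableSpace α] {μ : Measure α}

theorem inner_nonpos_of_ae_mul_nonpos {f g : Lp ℝ 2 μ} (h : ∀ᵐ x ∂μ, f x * g x ≤ 0) :
    inner ℝ f g ≤ 0 := by
  rw [inner_def]
  exact integral_nonpos_of_ae <| h.mono fun x hx => by simpa [mul_comm] using hx

theorem sq_norm_eq_integral_sq (f : Lp ℝ 2 μ) : ‖f‖ ^ 2 = ∫ x, f x ^ 2 ∂μ := by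
  rw [← real_inner_self_eq_norm_sq, inner_def]
  simp [sq]

end MeasureTheory.L2

theorem ae_eq_zero_of_ae_setIntegral_Ioo_eq_zero {E : Type*} [NormedAddCommGroup E]
    [NormedSpace ℝ E] [CompleteSpace E] {f : ℝ → E} {a b : ℝ} (hf : IntegrableOn f (Ioo a b))
    (h : ∀ᵐ x ∂volume.restrict (Ioo a b), ∫ ξ in Ioo a x, f ξ = 0) :
    f =ᵐ[volume.restrict (Ioo a b)] 0 := by
  rcases le_or_gt b a with hba | hab
  · simp [Ioo_eq_empty hba.not_gt, Filter.EventuallyEq]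
  have hf' : IntervalIntegrable f volume a b :=
    (intervalIntegrable_iff_integrableOn_Ioo_of_le hab.le).mpr hf
  set G := fun x => ∫ ξ in a..x, f ξ
  have hG_ae : G =ᵐ[volume.restrict (Ioo a b)] 0 := by
    filter_upwards [h, ae_restrict_mem measurableSet_Ioo] with x hx hxab
    change ∫ ξ in a..x, f ξ = 0
    rw [intervalIntegral.integral_of_le hxab.1.le, integral_Ioc_eq_integral_Ioo, hx]
  have hG_zero : EqOn G 0 (Ioo a b) :=
    Measure.eqOn_open_of_ae_eq hG_ae isOpen_Ioo
      ((intervalIntegral.continuousOn_primitive_interval' hf' left_mem_uIcc).mono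
        (Ioo_subset_Icc_self.trans Icc_subset_uIcc)) continuousOn_const
  rw [Filter.EventuallyEq, ae_restrict_iff' measurableSet_Ioo]
  filter_upwards [hf'.ae_hasDerivAt_integral] with x hderiv hx
  have hG_deriv : HasDerivAt G 0 x :=
    (hasDerivAt_const x 0).congr_of_eventuallyEq <|
      Filter.eventually_of_mem (Ioo_mem_nhds hx.1 hx.2) hG_zero
  exact (hderiv (Icc_subset_uIcc (Ioo_subset_Icc_self hx)) a left_mem_uIcc).unique hG_deriv

def IsVolterra (S : Lp ℝ 2 μ01 →L[ℝ] Lp ℝ 2 μ01) : Prop :=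
  ∀ u : Lp ℝ 2 μ01, ∀ᵐ x ∂μ01, (S u : ℝ → ℝ) x = ∫ ξ in Ioo 0 x, u ξ

namespace IsVolterra

variable {S : Lp ℝ 2 μ01 →L[ℝ] Lp ℝ 2 μ01}

theorem injective (hS : IsVolterra S) : Function.Injective S := by
  refine (injective_iff_map_eq_zero S).mpr fun u hu => ?_
  have hprim : ∀ᵐ x ∂μ01, ∫ ξ in Ioo 0 x, u ξ = 0 := by
    filter_upwards [hS u, hu ▸ Lp.coeFn_zero ℝ 2 μ01] with x hx hx0
    rw [← hx, hx0, Pi.zero_apply]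
  exact Lp.eq_zero_iff_ae_eq_zero.mpr <|
    ae_eq_zero_of_ae_setIntegral_Ioo_eq_zero ((Lp.memLp u).integrable one_le_two) hprim

theorem ae_apply_const (hS : IsVolterra S) (c : ℝ) :
    ∀ᵐ x ∂μ01, S (Lp.const 2 μ01 c) x = c * x := by
  filter_upwards [hS (Lp.const 2 μ01 c), ae_restrict_mem measurableSet_Ioo] with x hx hx01
  have hconst : ∀ᵐ ξ ∂volume.restrict (Ioo 0 x), Lp.const 2 μ01 c ξ = c :=
    ae_restrict_of_ae_restrict_of_subset (Ioo_subset_Ioo_right hx01.2.le)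
      (Lp.coeFn_const 2 μ01 c)
  rw [hx, integral_congr_ae hconst, setIntegral_const, Real.volume_real_Ioo_of_le hx01.1.le,
    sub_zero, smul_eq_mul, mul_comm]

theorem sq_norm_apply_const (hS : IsVolterra S) (c : ℝ) :
    ‖S (Lp.const 2 μ01 c)‖ ^ 2 = c ^ 2 / 3 := by
  rw [L2.sq_norm_eq_integral_sq, integral_congr_ae ((hS.ae_apply_const c).mono fun x hx =>
    congrArg (· ^ 2) hx), μ01, ← integral_Ioc_eq_integral_Ioo,
    ← intervalIntegral.integral_of_le zero_le_one]
  simp_rw [mul_pow]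
  rw [intervalIntegral.integral_const_mul, integral_pow]
  ring

end IsVolterra

theorem no_minimizer_with_positive_t_general
    (S : Lp ℝ 2 μ01 →L[ℝ] Lp ℝ 2 μ01)
    (hS : ∀ u : Lp ℝ 2 μ01, ∀ᵐ x ∂μ01, (S u : ℝ → ℝ) x = ∫ ξ in Ioo 0 x, u ξ)
    (ttil : ℝ) (httil : 0 < ttil)
    (u : Lp ℝ 2 μ01)
    (himp : ∀ᵐ x ∂μ01,
      ((ContinuousLinearMap.adjoint S (S u) : ℝ → ℝ) x > 0 → u x = -ttil) ∧
      ((ContinuousLinearMap.adjoint S (S u) : ℝ → ℝ) x < 0 → u x = ttil)) :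
    ContinuousLinearMap.adjoint S (S u) = 0 ∧ u = 0 ∧
      ¬ (∀ v : Lp ℝ 2 μ01, (∀ᵐ x ∂μ01, |v x| ≤ ttil) →
        ‖S u‖ ^ 2 - (1 / 2) * ‖u‖ ^ 2 ≤ ‖S v‖ ^ 2 - (1 / 2) * ‖v‖ ^ 2) := by
  have hS : IsVolterra S := hS
  have hSu : S u = 0 := S.apply_eq_zero_of_inner_adjoint_apply_nonpos <|
    L2.inner_nonpos_of_ae_mul_nonpos <|
      himp.mono fun x hx => mul_nonpos_of_bangBang httil.le hx.1 hx.2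
  have hu : u = 0 := hS.injective (hSu.trans (map_zero S).symm)
  refine ⟨by rw [hSu, map_zero], hu, fun hmin => ?_⟩
  have hconst : ∀ᵐ x ∂μ01, |Lp.const 2 μ01 ttil x| ≤ ttil :=
    (Lp.coeFn_const 2 μ01 ttil).mono fun x hx => by rw [hx, Function.const_apply, abs_of_pos httil]
  have hmin_const := hmin _ hconst
  rw [hSu, hu, hS.sq_norm_apply_const, Lp.norm_const 2 μ01 ttil two_ne_zero] at hmin_const
  norm_num [abs_of_pos httil] at hmin_const
  linarith [pow_pos httil 2]

/-- If `|u| ≤ t̃` a.e. with `t̃ > 0` and a.e. `(S*Su)(x) > 0 ⟹ u(x) = −t̃`,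
`(S*Su)(x) < 0 ⟹ u(x) = t̃`, then `S*Su = 0`, hence `u = 0`; consequently `u` is
not a minimizer of `‖Sv‖² − (1/2)‖v‖²` over `{v : |v| ≤ t̃ a.e.}`. -/
theorem no_minimizer_with_positive_t
    (S : Lp ℝ 2 μ01 →L[ℝ] Lp ℝ 2 μ01)
    (hS : ∀ u : Lp ℝ 2 μ01, ∀ᵐ x ∂μ01, (S u : ℝ → ℝ) x = ∫ ξ in Ioo 0 x, u ξ)
    (ttil : ℝ) (httil : 0 < ttil)
    (u : Lp ℝ 2 μ01) (hu : ∀ᵐ x ∂μ01, |u x| ≤ ttil)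
    (himp : ∀ᵐ x ∂μ01,
      ((ContinuousLinearMap.adjoint S (S u) : ℝ → ℝ) x > 0 → u x = -ttil) ∧
      ((ContinuousLinearMap.adjoint S (S u) : ℝ → ℝ) x < 0 → u x = ttil)) :
    ContinuousLinearMap.adjoint S (S u) = 0 ∧ u = 0 ∧
      ¬ (∀ v : Lp ℝ 2 μ01, (∀ᵐ x ∂μ01, |v x| ≤ ttil) →
        ‖S u‖ ^ 2 - (1 / 2) * ‖u‖ ^ 2 ≤ ‖S v‖ ^ 2 - (1 / 2) * ‖v‖ ^ 2) :=
  no_minimizer_with_positive_t_general S hS ttil httil u himp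
end

section
/- The Volterra operator S on L²(0,1) satisfies: for every nonzero u ∈ L²(0,1), 2‖Su‖² − ‖u‖² can be negative (e.g., taking u highly oscillatory), so the quadratic form (t,u) ↦ 2t² + 2‖Su‖² − ‖u‖² is not coercive on all of ℝ × L²(0,1), but it is coercive (with constant 1/6) on the cone C = {(t,u) : |u| ≤ t a.e.}. -/
/-!
The sign step `u = 1` on `(0, 1/2]`, `u = -1` after, has `‖u‖ = 1` while its primitive stays in
`[0, 1/2]`, so `2‖Su‖² - ‖u‖² ≤ -1/2`; with `t = 0` this also rules out coercivity on the whole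
space. On the cone, `‖u‖ ≤ t` because `μ01` is a probability measure, hence
`2t² - ‖u‖² ≥ t² ≥ (t² + ‖u‖²) / 2`.
-/

open MeasureTheory Set

namespace MeasureTheory

variable {α E : Type*} [MeasurableSpace α] {μ : Measure α} [IsProbabilityMeasure μ]
  [NormedAddCommGroup E] {p : ENNReal}

theorem Lp.norm_le_of_ae_norm_le {f : Lp E p μ} {C : ℝ} (hf : ∀ᵐ x ∂μ, ‖f x‖ ≤ C) :
    ‖f‖ ≤ C := by
  obtain ⟨x, hx⟩ := hf.exists
  simpa [measureUnivNNReal] using Lp.norm_le_of_ae_bound ((norm_nonneg _).trans hx) hf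

theorem MemLp.norm_toLp_of_ae_norm_eq (hp : p ≠ 0) {f : α → E} (hf : MemLp f p μ) {c : ℝ}
    (hfc : ∀ᵐ x ∂μ, ‖f x‖ = c) : ‖hf.toLp f‖ = c := by
  obtain ⟨x, hx⟩ := hfc.exists
  have hc : 0 ≤ c := hx ▸ norm_nonneg _
  have hconst : ∀ᵐ x ∂μ, ‖f x‖ = ‖c‖ := by
    filter_upwards [hfc] with x hx
    rw [hx, Real.norm_of_nonneg hc]
  rw [Lp.norm_toLp, eLpNorm_congr_norm_ae hconst, eLpNorm_const c hp (NeZero.ne μ)]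
  simp [hc]

end MeasureTheory

instance inst_s19 : IsProbabilityMeasure μ01 :=
  ⟨by simp [μ01, Real.volume_Ioo]⟩

noncomputable def signStep (x : ℝ) : ℝ := 1 - 2 * (Ioi (1/2 : ℝ)).indicator 1 x

theorem norm_signStep (x : ℝ) : ‖signStep x‖ = 1 := by
  by_cases hx : x ∈ Ioi (1/2 : ℝ) <;> norm_num [signStep, hx]

theorem memLp_signStep : MemLp signStep 2 μ01 :=
  MemLp.of_bound ((measurable_const.sub (measurable_const.mul
    (measurable_one.indicator measurableSet_Ioi))).aestronglyMeasurable) 1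
    (.of_forall fun x => (norm_signStep x).le)

theorem integral_Ioo_signStep {x : ℝ} (hx : 0 ≤ x) :
    ∫ ξ in Ioo 0 x, signStep ξ = x - 2 * max (x - 1/2) 0 := by
  have hind : Integrable ((Ioi (1/2 : ℝ)).indicator (1 : ℝ → ℝ)) (volume.restrict (Ioo 0 x)) :=
    (integrable_const 1).indicator measurableSet_Ioi
  simp only [signStep]
  rw [integral_sub (integrable_const 1) (hind.const_mul 2), integral_const_mul,
    integral_indicator_one measurableSet_Ioi, measureReal_restrict_apply measurableSet_Ioi]
  simp [Ioi_inter_Ioo, Real.volume_real_Ioo_of_le hx]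

theorem abs_integral_Ioo_signStep_le {x : ℝ} (hx : x ∈ Icc (0 : ℝ) 1) :
    |∫ ξ in Ioo 0 x, signStep ξ| ≤ 1/2 := by
  rw [integral_Ioo_signStep hx.1, abs_le]
  obtain ⟨hmax, hx'⟩ | ⟨hmax, hx'⟩ := max_cases (x - 1/2) 0 <;>
    exact ⟨by linarith [hx.1, hx.2], by linarith [hx.1, hx.2]⟩

theorem norm_volterra_signStep_le (S : Lp ℝ 2 μ01 →L[ℝ] Lp ℝ 2 μ01)
    (hS : ∀ u : Lp ℝ 2 μ01, ∀ᵐ x ∂μ01, (S u : ℝ → ℝ) x = ∫ ξ in Ioo 0 x, u ξ) :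
    ‖S (memLp_signStep.toLp signStep)‖ ≤ 1/2 := by
  refine Lp.norm_le_of_ae_norm_le ?_
  filter_upwards [hS (memLp_signStep.toLp signStep), ae_restrict_mem measurableSet_Ioo]
    with x hSx hx
  have hsub : Ioo 0 x ⊆ Ioo (0 : ℝ) 1 := Ioo_subset_Ioo_right hx.2.le
  rw [hSx, integral_congr_ae (ae_restrict_of_ae_restrict_of_subset hsub memLp_signStep.coeFn_toLp),
    Real.norm_eq_abs]
  exact abs_integral_Ioo_signStep_le (Ioo_subset_Icc_self hx)

/-- The quadratic form `Q(t,u) = 2t² + 2‖Su‖² − ‖u‖²` is not coercive on all of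
`ℝ × L²(0,1)` (indeed `2‖Su‖² − ‖u‖² < 0` for some `u ≠ 0`), but it is coercive
with constant `1/6` on the cone `C = {(t,u) : |u| ≤ t a.e.}`. -/
theorem quadratic_form_coercive_only_on_cone
    (S : Lp ℝ 2 μ01 →L[ℝ] Lp ℝ 2 μ01)
    (hS : ∀ u : Lp ℝ 2 μ01, ∀ᵐ x ∂μ01, (S u : ℝ → ℝ) x = ∫ ξ in Ioo 0 x, u ξ) :
    (∃ u : Lp ℝ 2 μ01, u ≠ 0 ∧ 2 * ‖S u‖ ^ 2 - ‖u‖ ^ 2 < 0) ∧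
    ¬ (∃ β > (0:ℝ), ∀ (t : ℝ) (u : Lp ℝ 2 μ01),
        β * (t ^ 2 + ‖u‖ ^ 2) ≤ 2 * t ^ 2 + 2 * ‖S u‖ ^ 2 - ‖u‖ ^ 2) ∧
    (∀ (t : ℝ) (u : Lp ℝ 2 μ01), (∀ᵐ x ∂μ01, |u x| ≤ t) →
      (1 / 6) * (t ^ 2 + ‖u‖ ^ 2) ≤ 2 * t ^ 2 + 2 * ‖S u‖ ^ 2 - ‖u‖ ^ 2) := by
  set u := memLp_signStep.toLp signStep
  have hu : ‖u‖ = 1 :=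
    memLp_signStep.norm_toLp_of_ae_norm_eq two_ne_zero (.of_forall norm_signStep)
  have hSu : ‖S u‖ ≤ 1/2 := norm_volterra_signStep_le S hS
  have hneg : 2 * ‖S u‖ ^ 2 - ‖u‖ ^ 2 < 0 := by nlinarith [norm_nonneg (S u)]
  refine ⟨⟨u, norm_ne_zero_iff.mp (hu ▸ one_ne_zero), hneg⟩, ?_, ?_⟩
  · rintro ⟨β, hβ, hcoercive⟩
    nlinarith [hcoercive 0 u]
  · intro t v hv
    have hvt : ‖v‖ ≤ t := Lp.norm_le_of_ae_norm_le (by simpa only [Real.norm_eq_abs] using hv)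
    nlinarith [norm_nonneg v, sq_nonneg ‖S v‖]
end
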